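/- arXiv:2105.15038 — 4 statements merged into one kernel-verified Lean document; each statement's English description precedes it below -/
import Mathlib

section
/- The map g is integrable: there exists a continuous function H : M → ℝ such that H ∘ φ = H and H ∘ ψ = H (hence H ∘ g = H), and H is not constant on any nonempty open subset of M. -/
open Real MeasureTheory

noncomputable section

instance : Fact (0 < 2 * π) := ⟨by positivity⟩

/-- The cylinder `(ℝ/2πℤ) × ℝ`. -/
abbrev Cyl : Type := AddCircle (2 * π) × ℝ

/-- The quotient map `ℝ² → Cyl`. -/
def q2 (v : ℝ × ℝ) : Cyl := ((v.1 : AddCircle (2 * π)), v.2)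

/-- The lift of a point of the cylinder to the fundamental domain `[-π, π) × ℝ`. -/
def cylLift (m : Cyl) : ℝ × ℝ :=
  ((AddCircle.equivIco (2 * π) (-π) m.1 : ℝ), m.2)

/-- The Euclidean norm on `ℝ × ℝ`. -/
def eNorm (v : ℝ × ℝ) : ℝ := Real.sqrt (v.1 ^ 2 + v.2 ^ 2)

/-- Rotation of the plane about the origin by angle `a`. -/
def rot (a : ℝ) (v : ℝ × ℝ) : ℝ × ℝ :=
  (Real.cos a * v.1 - Real.sin a * v.2, Real.sin a * v.1 + Real.cos a * v.2)

/-- The planar twist map: rotate `v` about the origin by the angle `α (eNorm v)`. -/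
def twist (α : ℝ → ℝ) (v : ℝ × ℝ) : ℝ × ℝ := rot (α (eNorm v)) v

/-- The twist map descended to the cylinder. -/
def psi (α : ℝ → ℝ) (m : Cyl) : Cyl := q2 (twist α (cylLift m))

/-- The half rotation `(θ, s) ↦ (θ + π, s)` of the cylinder. -/
def phi (m : Cyl) : Cyl := (m.1 + ((π : ℝ) : AddCircle (2 * π)), m.2)

/-- The composition `g = φ ∘ ψ`. -/
def gmap (α : ℝ → ℝ) : Cyl → Cyl := phi ∘ psi α

/-- The image in the cylinder of the open Euclidean unit disk centered at the origin. -/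
def Dset : Set Cyl := q2 '' {v : ℝ × ℝ | eNorm v < 1}

/-- The distance on the cylinder induced by the Euclidean metric on `ℝ²`. -/
def cylDist (x y : Cyl) : ℝ := Real.sqrt (dist x.1 y.1 ^ 2 + dist x.2 y.2 ^ 2)

/-- The hypotheses on the twist angle profile `α`: continuous, non-increasing on `[0, ∞)`,
greater than `0.2` on `[0, 0.7]` and vanishing on `[0.9, ∞)`. -/
structure TwistAngle (α : ℝ → ℝ) : Prop where
  cont : Continuous α
  anti : AntitoneOn α (Set.Ici 0)
  big : ∀ r ∈ Set.Icc (0 : ℝ) 0.7, 0.2 < α r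
  zero : ∀ r : ℝ, 0.9 ≤ r → α r = 0

/-!
The first integral is the squared distance to the nearer of the two centres `(0, 0)` and
`(π, 0)`: `H(θ, s) = min(|θ|, |θ - π|)² + s²`. The half rotation swaps the centres. Near the
centre `(0, 0)`, `H` is the squared Euclidean norm of the lift, which the twist preserves, and
away from it the twist is the identity. On each vertical line `H` is strictly increasing in `|s|`,
so it is constant on no open set.
-/

lemma coe_pi_add_coe_pi : ((π : ℝ) : AddCircle (2 * π)) + (π : ℝ) = 0 := by
  rw [← AddCircle.coe_add, ← two_mul, AddCircle.coe_period]

lemma norm_coe_of_abs_le_pi {x : ℝ} (hx : |x| ≤ π) : ‖(x : AddCircle (2 * π))‖ = |x| :=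
  (AddCircle.norm_coe_eq_abs_iff _ two_pi_pos.ne').2 <| by
    rwa [abs_of_pos two_pi_pos, mul_div_cancel_left₀ _ two_ne_zero]

lemma min_dist_coe_zero_coe_pi {x : ℝ} (hx : |x| ≤ π / 2) :
    min (dist (x : AddCircle (2 * π)) 0) (dist (x : AddCircle (2 * π)) (π : ℝ)) = |x| := by
  have hnorm : ‖(x : AddCircle (2 * π))‖ = |x| := norm_coe_of_abs_le_pi (by linarith [pi_pos])
  have hπ : π - |x| ≤ dist (x : AddCircle (2 * π)) (π : ℝ) := by
    have := dist_triangle (0 : AddCircle (2 * π)) x (π : ℝ)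
    rw [dist_zero_left, dist_zero_left, hnorm, norm_coe_of_abs_le_pi (abs_of_pos pi_pos).le,
      abs_of_pos pi_pos] at this
    linarith
  rw [dist_zero_right, hnorm, min_eq_left (by linarith)]

lemma q2_cylLift (m : Cyl) : q2 (cylLift m) = m :=
  Prod.ext ((AddCircle.equivIco (2 * π) (-π)).symm_apply_apply m.1) rfl

lemma eNorm_sq (v : ℝ × ℝ) : eNorm v ^ 2 = v.1 ^ 2 + v.2 ^ 2 :=
  sq_sqrt (by positivity)

lemma abs_fst_le_eNorm (v : ℝ × ℝ) : |v.1| ≤ eNorm v :=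
  abs_le_sqrt (le_add_of_nonneg_right (sq_nonneg _))

lemma eNorm_rot (a : ℝ) (v : ℝ × ℝ) : eNorm (rot a v) = eNorm v := by
  unfold eNorm rot
  congr 1
  linear_combination (v.1 ^ 2 + v.2 ^ 2) * sin_sq_add_cos_sq a

lemma rot_zero (v : ℝ × ℝ) : rot 0 v = v := by
  simp [rot]

def firstIntegral (m : Cyl) : ℝ :=
  min (dist m.1 0) (dist m.1 ((π : ℝ) : AddCircle (2 * π))) ^ 2 + m.2 ^ 2

lemma continuous_firstIntegral : Continuous firstIntegral := by
  unfold firstIntegral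
  fun_prop

lemma firstIntegral_q2 {v : ℝ × ℝ} (hv : |v.1| ≤ π / 2) :
    firstIntegral (q2 v) = eNorm v ^ 2 := by
  rw [firstIntegral, q2, min_dist_coe_zero_coe_pi hv, sq_abs, eNorm_sq]

lemma firstIntegral_phi (m : Cyl) : firstIntegral (phi m) = firstIntegral m := by
  have h₀ : dist (m.1 + (π : ℝ)) 0 = dist m.1 ((π : ℝ) : AddCircle (2 * π)) := by
    rw [← coe_pi_add_coe_pi, dist_add_right]
  have hπ : dist (m.1 + (π : ℝ)) ((π : ℝ) : AddCircle (2 * π)) = dist m.1 0 := by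
    rw [dist_add_self_left, dist_zero_right]
  simp only [firstIntegral, phi, h₀, hπ, min_comm]

lemma firstIntegral_psi {α : ℝ → ℝ} (hα : ∀ r, π / 2 ≤ r → α r = 0) (m : Cyl) :
    firstIntegral (psi α m) = firstIntegral m := by
  set x := cylLift m
  rw [psi, twist]
  by_cases hx : eNorm x < π / 2
  · have hrot : |(rot (α (eNorm x)) x).1| ≤ π / 2 :=
      (abs_fst_le_eNorm _).trans (by rw [eNorm_rot]; exact hx.le)
    rw [firstIntegral_q2 hrot, eNorm_rot, ← firstIntegral_q2 ((abs_fst_le_eNorm x).trans hx.le),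
      q2_cylLift]
  · rw [hα _ (not_lt.1 hx), rot_zero, q2_cylLift]

lemma exists_sq_ne_of_isOpen {V : Set ℝ} (hV : IsOpen V) {s : ℝ} (hs : s ∈ V) :
    ∃ t ∈ V, t ^ 2 ≠ s ^ 2 := by
  obtain ⟨t, htV, ht⟩ := (infinite_of_mem_nhds s (hV.mem_nhds hs)).exists_notMem_finite
    (Set.toFinite {s, -s})
  refine ⟨t, htV, fun h => ht ?_⟩
  rcases sq_eq_sq_iff_eq_or_eq_neg.1 h with h | h <;> simp [h]

lemma exists_firstIntegral_ne_of_isOpen {U : Set Cyl} (hU : IsOpen U) {m : Cyl} (hm : m ∈ U) :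
    ∃ y ∈ U, firstIntegral y ≠ firstIntegral m := by
  have hV : IsOpen {t : ℝ | (m.1, t) ∈ U} := hU.preimage (by fun_prop)
  obtain ⟨t, ht, hne⟩ := exists_sq_ne_of_isOpen hV (s := m.2) hm
  refine ⟨(m.1, t), ht, fun h => hne ?_⟩
  simpa [firstIntegral] using h

/-- g is integrable: there is a continuous first integral H, invariant under
both φ and ψ (hence under g), which is not constant on any nonempty open set. -/
theorem gmap_integrable (α : ℝ → ℝ) (hα : TwistAngle α) :
    ∃ H : Cyl → ℝ, Continuous H ∧ H ∘ phi = H ∧ H ∘ psi α = H ∧ H ∘ gmap α = H ∧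
      ∀ U : Set Cyl, IsOpen U → U.Nonempty → ∃ x ∈ U, ∃ y ∈ U, H x ≠ H y := by
  have hψ : firstIntegral ∘ psi α = firstIntegral :=
    funext <| firstIntegral_psi fun r hr => hα.zero r (by linarith [pi_gt_three])
  have hφ : firstIntegral ∘ phi = firstIntegral := funext firstIntegral_phi
  refine ⟨firstIntegral, continuous_firstIntegral, hφ, hψ, ?_, ?_⟩
  · rw [gmap, ← Function.comp_assoc, hφ, hψ]
  · rintro U hU ⟨m, hm⟩
    obtain ⟨y, hy, hne⟩ := exists_firstIntegral_ne_of_isOpen hU hm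
    exact ⟨y, hy, m, hm, hne⟩
end
end

section
/- The half rotation is an involution that quantitatively displaces D: φ ∘ φ = id_M, and for all p, q ∈ D one has dist(φ(p), q) ≥ π − 2; moreover ψ(D) ⊆ D, so for all p, q ∈ D one also has dist(g(p), q) ≥ π − 2. In particular φ(D) ∩ D = ∅ and g(D) ∩ D = ∅. -/
open Real MeasureTheory

noncomputable section

/-
A point of `D` lifts to a point of the unit disk in the fundamental domain, so its angular
coordinate lies in `(-1, 1)`; after the half rotation it lies in `(π - 1, π + 1)`, and the circle
distance between the two angles is at least `π - 2` because `x ↦ ‖(x : AddCircle p)‖` is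
`1`-Lipschitz and equals `p / 2` at `p / 2`. The twist is a rotation, so it preserves the
Euclidean norm and hence maps `D` into `D`; the bound for `g = φ ∘ ψ` follows.
-/

lemma AddCircle.half_period_sub_abs_le_norm_coe {p : ℝ} [Fact (0 < p)] (x : ℝ) :
    p / 2 - |x - p / 2| ≤ ‖(x : AddCircle p)‖ := by
  have hp : 0 < p := Fact.out
  have h : ‖((p / 2 - x : ℝ) : AddCircle p)‖ ≤ |x - p / 2| := by
    rw [abs_sub_comm]; exact QuotientAddGroup.norm_mk_le_norm
  have := norm_le_norm_add_norm_sub' ((p / 2 : ℝ) : AddCircle p) (x : AddCircle p)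
  rw [AddCircle.norm_half_period_eq, abs_of_pos hp, ← AddCircle.coe_sub] at this
  linarith

lemma AddCircle.half_period_sub_abs_le_dist_add_half_period {p : ℝ} [Fact (0 < p)] (x y : ℝ) :
    p / 2 - |x - y| ≤ dist ((x : AddCircle p) + ((p / 2 : ℝ) : AddCircle p)) (y : AddCircle p) := by
  rw [dist_eq_norm, ← AddCircle.coe_add, ← AddCircle.coe_sub]
  convert AddCircle.half_period_sub_abs_le_norm_coe (p := p) (x + p / 2 - y) using 3
  ring

lemma eNorm_twist (α : ℝ → ℝ) (v : ℝ × ℝ) : eNorm (twist α v) = eNorm v :=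
  eNorm_rot _ v

lemma cylLift_q2_of_mem_Ico {v : ℝ × ℝ} (hv : v.1 ∈ Set.Ico (-π) π) : cylLift (q2 v) = v := by
  have hv' : v.1 ∈ Set.Ico (-π) (-π + 2 * π) := by rwa [show -π + 2 * π = π by ring]
  simp only [cylLift, q2, AddCircle.equivIco_coe_of_mem hv']

lemma dist_fst_le_cylDist (x y : Cyl) : dist x.1 y.1 ≤ cylDist x y :=
  Real.le_sqrt_of_sq_le (le_add_of_nonneg_right (sq_nonneg _))

lemma cylDist_self (x : Cyl) : cylDist x x = 0 := by
  simp [cylDist]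

lemma phi_involutive : Function.Involutive phi := by
  intro m
  have h : ((π : ℝ) : AddCircle (2 * π)) + ((π : ℝ) : AddCircle (2 * π)) = 0 := by
    rw [← AddCircle.coe_add, ← two_mul, AddCircle.coe_period]
  simp only [phi, add_assoc, h, add_zero]

lemma exists_abs_fst_lt_one_of_mem_Dset {m : Cyl} (hm : m ∈ Dset) :
    ∃ v : ℝ × ℝ, |v.1| < 1 ∧ q2 v = m := by
  obtain ⟨v, hv, rfl⟩ := hm
  exact ⟨v, (abs_fst_le_eNorm v).trans_lt hv, rfl⟩

lemma phi_displaces_Dset {m n : Cyl} (hm : m ∈ Dset) (hn : n ∈ Dset) :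
    π - 2 ≤ cylDist (phi m) n := by
  obtain ⟨v, hv, rfl⟩ := exists_abs_fst_lt_one_of_mem_Dset hm
  obtain ⟨w, hw, rfl⟩ := exists_abs_fst_lt_one_of_mem_Dset hn
  have hvw : |v.1 - w.1| < 2 := (abs_sub v.1 w.1).trans_lt (by linarith)
  have h := AddCircle.half_period_sub_abs_le_dist_add_half_period (p := 2 * π) v.1 w.1
  rw [mul_div_cancel_left₀ π two_ne_zero] at h
  calc π - 2 ≤ π - |v.1 - w.1| := by linarith
    _ ≤ dist (phi (q2 v)).1 (q2 w).1 := h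
    _ ≤ cylDist (phi (q2 v)) (q2 w) := dist_fst_le_cylDist _ _

lemma psi_mapsTo_Dset (α : ℝ → ℝ) : Set.MapsTo (psi α) Dset Dset := by
  rintro _ ⟨v, hv, rfl⟩
  have hv1 : v.1 ∈ Set.Ico (-π) π := by
    have := abs_lt.mp ((abs_fst_le_eNorm v).trans_lt hv)
    constructor <;> linarith [Real.pi_gt_three]
  refine ⟨twist α v, ?_, ?_⟩
  · rwa [Set.mem_ofPred_eq, eNorm_twist]
  · rw [psi, cylLift_q2_of_mem_Ico hv1]

lemma image_inter_eq_empty_of_le_cylDist {f : Cyl → Cyl} {S : Set Cyl} {c : ℝ} (hc : 0 < c)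
    (hf : ∀ m ∈ S, ∀ n ∈ S, c ≤ cylDist (f m) n) : f '' S ∩ S = ∅ := by
  refine Set.eq_empty_of_forall_notMem ?_
  rintro _ ⟨⟨m, hm, rfl⟩, hfm⟩
  have := hf m hm (f m) hfm
  rw [cylDist_self] at this
  linarith

theorem phi_involution_displaces_general (α : ℝ → ℝ) :
    phi ∘ phi = id ∧
    (∀ p ∈ Dset, ∀ q ∈ Dset, π - 2 ≤ cylDist (phi p) q) ∧
    psi α '' Dset ⊆ Dset ∧
    (∀ p ∈ Dset, ∀ q ∈ Dset, π - 2 ≤ cylDist (gmap α p) q) ∧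
    phi '' Dset ∩ Dset = ∅ ∧
    gmap α '' Dset ∩ Dset = ∅ := by
  have hφ : ∀ p ∈ Dset, ∀ q ∈ Dset, π - 2 ≤ cylDist (phi p) q :=
    fun p hp q hq ↦ phi_displaces_Dset hp hq
  have hg : ∀ p ∈ Dset, ∀ q ∈ Dset, π - 2 ≤ cylDist (gmap α p) q :=
    fun p hp q hq ↦ phi_displaces_Dset (psi_mapsTo_Dset α hp) hq
  have hπ : 0 < π - 2 := by linarith [Real.pi_gt_three]
  exact ⟨phi_involutive.comp_self, hφ, (psi_mapsTo_Dset α).image_subset, hg,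
    image_inter_eq_empty_of_le_cylDist hπ hφ, image_inter_eq_empty_of_le_cylDist hπ hg⟩

/-- φ is an involution quantitatively displacing D; ψ(D) ⊆ D, so g also
quantitatively displaces D; in particular φ(D) ∩ D = ∅ and g(D) ∩ D = ∅. -/
theorem phi_involution_displaces (α : ℝ → ℝ) (hα : TwistAngle α) :
    phi ∘ phi = id ∧
    (∀ p ∈ Dset, ∀ q ∈ Dset, π - 2 ≤ cylDist (phi p) q) ∧
    psi α '' Dset ⊆ Dset ∧
    (∀ p ∈ Dset, ∀ q ∈ Dset, π - 2 ≤ cylDist (gmap α p) q) ∧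
    phi '' Dset ∩ Dset = ∅ ∧
    gmap α '' Dset ∩ Dset = ∅ :=
  phi_involution_displaces_general α
end
end

section
/- A continuous planar vector field on a closed disk that points counterclockwise along the boundary circle has a zero inside: let r > 0 and let X : ℝ² → ℝ² be continuous on the closed disk {‖p‖ ≤ r}. If ⟨X(p), (−p₂, p₁)⟩ > 0 for every p = (p₁, p₂) with ‖p‖ = r, then there exists x with ‖x‖ < r and X(x) = 0. -/
open Real RealInnerProductSpace

open MeasureTheory intervalIntegral

noncomputable section

lemma loop_integral_mem (γ d : ℝ → ℂ) (hd : ∀ t, HasDerivAt γ (d t) t)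
    (hdc : Continuous d) (hnz : ∀ t, γ t ≠ 0) (hper : γ (2 * π) = γ 0) :
    ∃ n : ℤ, ∫ t in (0:ℝ)..(2*π), d t / γ t = n * (2 * π * Complex.I) := by
  have hγc : Continuous γ := by
    have : Differentiable ℝ γ := fun t => (hd t).differentiableAt
    exact this.continuous
  have hqc : Continuous (fun t => d t / γ t) := hdc.div hγc hnz
  set F : ℝ → ℂ := fun t => ∫ u in (0:ℝ)..t, d u / γ u with hF
  have hFd : ∀ t, HasDerivAt F (d t / γ t) t := fun t =>
    (intervalIntegral.integral_hasStrictDerivAt_right (hqc.intervalIntegrable 0 t)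
      (hqc.stronglyMeasurableAtFilter _ _) hqc.continuousAt).hasDerivAt
  set h : ℝ → ℂ := fun t => γ t * Complex.exp (-F t) with hh
  have hhd : ∀ t, HasDerivAt h 0 t := by
    intro t
    have h1 : HasDerivAt (fun t => Complex.exp (-F t)) (Complex.exp (-F t) * (-(d t / γ t))) t :=
      ((hFd t).neg).cexp
    have := (hd t).mul h1
    refine this.congr_deriv ?_
    rw [div_eq_mul_inv]
    field_simp [hnz t]
    ring
  have hconst : h (2 * π) = h 0 := by
    have : ∀ t, deriv h t = 0 := fun t => (hhd t).deriv
    have hdh : Differentiable ℝ h := fun t => (hhd t).differentiableAt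
    rw [is_const_of_deriv_eq_zero hdh this (2*π) 0]
  have hF0 : F 0 = 0 := intervalIntegral.integral_same
  rw [hh] at hconst
  simp only at hconst
  rw [hper, hF0, neg_zero, Complex.exp_zero, mul_one] at hconst
  have hexp : Complex.exp (-F (2*π)) = 1 := by
    have := mul_left_cancel₀ (hnz 0) (hconst.trans (mul_one (γ 0)).symm)
    exact this
  rw [Complex.exp_eq_one_iff] at hexp
  obtain ⟨n, hn⟩ := hexp
  refine ⟨-n, ?_⟩
  have : F (2*π) = -(n * (2 * π * Complex.I)) := by linear_combination -hn
  rw [show (∫ (t : ℝ) in (0:ℝ)..2 * π, d t / γ t) = F (2*π) from rfl, this]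
  push_cast; ring



lemma cont_param_integral {g : ℝ × ℝ → ℂ} (hg : Continuous g) :
    Continuous fun s => ∫ t in (0:ℝ)..(2*π), g (s, t) := by
  rw [continuous_iff_continuousAt]
  intro s₀
  obtain ⟨C, hC⟩ : ∃ C, ∀ p ∈ (Set.Icc (s₀-1) (s₀+1) ×ˢ Set.uIcc (0:ℝ) (2*π)), ‖g p‖ ≤ C := by
    obtain ⟨C, hC⟩ := (isCompact_Icc.prod isCompact_uIcc).exists_bound_of_continuousOn
      hg.continuousOn
    exact ⟨C, hC⟩
  apply intervalIntegral.continuousAt_of_dominated_interval (bound := fun _ => C)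
  · filter_upwards with s
    exact (hg.comp (continuous_const.prodMk continuous_id)).aestronglyMeasurable
  · filter_upwards [Icc_mem_nhds (by linarith : s₀ - 1 < s₀) (by linarith : s₀ < s₀+1)] with s hs
    filter_upwards with t ht
    exact hC (s, t) ⟨hs, Set.Ioc_subset_Icc_self ht⟩
  · exact intervalIntegrable_const
  · filter_upwards with t ht
    exact (hg.comp (continuous_id.prodMk continuous_const)).continuousAt

/-- A continuous real function on an interval with values in 2πℤ has equal endpoints. -/
lemma endpoints_eq_of_discrete {a b : ℝ} (hab : a ≤ b) {c : ℝ → ℝ}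
    (hc : ContinuousOn c (Set.Icc a b))
    (hv : ∀ s ∈ Set.Icc a b, ∃ n : ℤ, c s = n * (2*π)) : c a = c b := by
  by_contra hne
  obtain ⟨na, hna⟩ := hv a ⟨le_refl a, hab⟩
  obtain ⟨nb, hnb⟩ := hv b ⟨hab, le_refl b⟩
  have hpi := pi_pos
  rcases lt_or_gt_of_ne hne with h | h
  · -- c a < c b, pick y = c a + π
    have h2 : c a + π < c b := by
      have : na < nb := by
        by_contra hle
        push_neg at hle
        have : (nb:ℝ) ≤ na := by exact_mod_cast hle
        nlinarith
      have : (na:ℝ) + 1 ≤ nb := by exact_mod_cast this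
      nlinarith
    obtain ⟨s, hs, hcs⟩ := intermediate_value_Icc hab hc
      (⟨by linarith, by linarith⟩ : c a + π ∈ Set.Icc (c a) (c b))
    obtain ⟨m, hm⟩ := hv s hs
    rw [hna] at hcs
    have : (2*m : ℝ) = 2*na + 1 := by
      have := hm.symm.trans hcs
      nlinarith
    have : (2*m : ℤ) = 2*na+1 := by exact_mod_cast this
    omega
  · have h2 : c b < c a - π := by
      have : nb < na := by
        by_contra hle
        push_neg at hle
        have : (na:ℝ) ≤ nb := by exact_mod_cast hle
        nlinarith
      have : (nb:ℝ) + 1 ≤ na := by exact_mod_cast this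
      nlinarith
    obtain ⟨s, hs, hcs⟩ := intermediate_value_Icc' hab hc
      (⟨by linarith, by linarith⟩ : c a - π ∈ Set.Icc (c b) (c a))
    obtain ⟨m, hm⟩ := hv s hs
    rw [hna] at hcs
    have : (2*m : ℝ) = 2*na - 1 := by
      have := hm.symm.trans hcs
      nlinarith
    have : (2*m : ℤ) = 2*na-1 := by exact_mod_cast this
    omega

lemma family_eq (Γ Δ : ℝ → ℝ → ℂ)
    (hΓc : Continuous fun p : ℝ × ℝ => Γ p.1 p.2)
    (hΔc : Continuous fun p : ℝ × ℝ => Δ p.1 p.2)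
    (hd : ∀ s t, HasDerivAt (fun t => Γ s t) (Δ s t) t)
    (hnz : ∀ s t, Γ s t ≠ 0)
    (hper : ∀ s, Γ s (2 * π) = Γ s 0) :
    (∫ t in (0:ℝ)..(2*π), Δ 0 t / Γ 0 t).im = (∫ t in (0:ℝ)..(2*π), Δ 1 t / Γ 1 t).im := by
  set W : ℝ → ℂ := fun s => ∫ t in (0:ℝ)..(2*π), Δ s t / Γ s t with hW
  have hWc : Continuous W :=
    cont_param_integral (g := fun p : ℝ × ℝ => Δ p.1 p.2 / Γ p.1 p.2)
      (hΔc.div hΓc (fun p => hnz p.1 p.2))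
  have hval : ∀ s, ∃ n : ℤ, W s = n * (2 * π * Complex.I) := by
    intro s
    apply loop_integral_mem (fun t => Γ s t) (fun t => Δ s t) (hd s)
      (hΔc.comp (continuous_const.prodMk continuous_id)) (hnz s) (hper s)
  have := endpoints_eq_of_discrete (zero_le_one) (c := fun s => (W s).im)
    ((Complex.continuous_im.comp hWc).continuousOn) ?_
  · exact this
  · intro s _
    obtain ⟨n, hn⟩ := hval s
    exact ⟨n, by simp only [hn]; simp⟩

lemma smooth_approx (r : ℝ) (g : ℂ → ℝ) (hg : ContinuousOn g (Metric.closedBall 0 r))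
    {ε : ℝ} (hε : 0 < ε) :
    ∃ H : ℂ → ℝ, ContDiff ℝ (⊤ : ℕ∞) H ∧ ∀ z ∈ Metric.closedBall (0:ℂ) r, |H z - g z| < ε := by
  haveI : CompactSpace (Metric.closedBall (0:ℂ) r) :=
    isCompact_iff_compactSpace.mp (isCompact_closedBall 0 r)
  set K := Metric.closedBall (0:ℂ) r
  set reK : C(K, ℝ) := ⟨fun z => (z:ℂ).re, (Complex.continuous_re.comp continuous_subtype_val)⟩
  set imK : C(K, ℝ) := ⟨fun z => (z:ℂ).im, (Complex.continuous_im.comp continuous_subtype_val)⟩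
  set A : Subalgebra ℝ C(K, ℝ) := Algebra.adjoin ℝ {reK, imK}
  have hsep : A.SeparatesPoints := by
    intro x y hxy
    have hne : (x:ℂ) ≠ y := Subtype.coe_ne_coe.mpr hxy
    by_cases h : (x:ℂ).re = (y:ℂ).re
    · refine ⟨imK, ⟨imK, Algebra.subset_adjoin (by simp), rfl⟩, ?_⟩
      simp only [imK, ContinuousMap.coe_mk]
      intro hc
      exact hne (Complex.ext h hc)
    · exact ⟨reK, ⟨reK, Algebra.subset_adjoin (by simp), rfl⟩, h⟩
  obtain ⟨⟨p, hpA⟩, hp⟩ := ContinuousMap.exists_mem_subalgebra_near_continuous_of_separatesPoints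
    A hsep (fun z : K => g z) (hg.restrict) ε hε
  -- every element of A extends to a smooth function
  have hext : ∀ q ∈ A, ∃ H : ℂ → ℝ, ContDiff ℝ (⊤ : ℕ∞) H ∧ ∀ z : K, H z = q z := by
    intro q hq
    induction hq using Algebra.adjoin_induction with
    | mem x hx =>
      rcases hx with h | h
      · exact ⟨Complex.re, Complex.reCLM.contDiff, fun z => by rw [h]; rfl⟩
      · exact ⟨Complex.im, Complex.imCLM.contDiff, fun z => by rw [h]; rfl⟩
    | algebraMap c => exact ⟨fun _ => c, contDiff_const, fun z => rfl⟩
    | add x y hx hy ihx ihy =>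
      obtain ⟨Hx, hHx, hx'⟩ := ihx
      obtain ⟨Hy, hHy, hy'⟩ := ihy
      exact ⟨Hx + Hy, hHx.add hHy, fun z => by simp [hx' z, hy' z]⟩
    | mul x y hx hy ihx ihy =>
      obtain ⟨Hx, hHx, hx'⟩ := ihx
      obtain ⟨Hy, hHy, hy'⟩ := ihy
      exact ⟨Hx * Hy, hHx.mul hHy, fun z => by simp [hx' z, hy' z]⟩
  obtain ⟨H, hH, hHp⟩ := hext p hpA
  refine ⟨H, hH, fun z hz => ?_⟩
  have := hp ⟨z, hz⟩
  rw [← hHp ⟨z, hz⟩] at this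
  simpa [Real.norm_eq_abs] using this

noncomputable section

open Complex in
/-- complex smooth approximation of a continuous function on the closed disk -/
lemma smooth_approxC (r : ℝ) (g : ℂ → ℂ) (hg : ContinuousOn g (Metric.closedBall 0 r))
    {ε : ℝ} (hε : 0 < ε) :
    ∃ h : ℂ → ℂ, ContDiff ℝ (⊤ : ℕ∞) h ∧ ∀ z ∈ Metric.closedBall (0:ℂ) r, ‖h z - g z‖ < ε := by
  obtain ⟨H₁, hH₁, h1⟩ := smooth_approx r (fun z => (g z).re)
    (Complex.continuous_re.comp_continuousOn hg) (half_pos hε)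
  obtain ⟨H₂, hH₂, h2⟩ := smooth_approx r (fun z => (g z).im)
    (Complex.continuous_im.comp_continuousOn hg) (half_pos hε)
  refine ⟨fun z => (H₁ z : ℂ) + (H₂ z : ℂ) * Complex.I,
    (Complex.ofRealCLM.contDiff.comp hH₁).add
      ((Complex.ofRealCLM.contDiff.comp hH₂).mul contDiff_const), fun z hz => ?_⟩
  have hre : ((H₁ z : ℂ) + (H₂ z : ℂ) * Complex.I - g z).re = H₁ z - (g z).re := by simp
  have him : ((H₁ z : ℂ) + (H₂ z : ℂ) * Complex.I - g z).im = H₂ z - (g z).im := by simp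
  calc ‖(H₁ z : ℂ) + (H₂ z : ℂ) * Complex.I - g z‖
      ≤ |((H₁ z : ℂ) + (H₂ z : ℂ) * Complex.I - g z).re| +
        |((H₁ z : ℂ) + (H₂ z : ℂ) * Complex.I - g z).im| :=
        Complex.norm_le_abs_re_add_abs_im _
    _ < ε := by rw [hre, him]; have := h1 z hz; have := h2 z hz; linarith
lemma no_smooth_ccw_field (r : ℝ) (hr : 0 < r) (h : ℂ → ℂ) (hh : ContDiff ℝ (⊤ : ℕ∞) h)
    (hnz : ∀ z : ℂ, ‖z‖ ≤ r → h z ≠ 0)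
    (hbd : ∀ z : ℂ, ‖z‖ = r → 0 < ((starRingEnd ℂ) (h z) * (Complex.I * z)).re) :
    False := by
  -- clamp to [0,1]
  set φ : ℝ → ℝ := fun s => max 0 (min s 1) with hφ
  have hφ0 : φ 0 = 0 := by simp [hφ]
  have hφ1 : φ 1 = 1 := by simp [hφ]
  have hφ01 : ∀ s, 0 ≤ φ s ∧ φ s ≤ 1 := fun s =>
    ⟨le_max_left _ _, max_le (by linarith) (min_le_right _ _)⟩
  have hφc : Continuous φ := continuous_const.max (continuous_id.min continuous_const)
  -- derivative of b * exp (t I)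
  have hexp : ∀ (b : ℂ) (t : ℝ), HasDerivAt (fun t : ℝ => b * Complex.exp (t * Complex.I))
      (b * (Complex.exp (t * Complex.I) * Complex.I)) t := by
    intro b t
    have h1 : HasDerivAt (fun t : ℝ => (t : ℂ)) 1 t := by
      simpa using (hasDerivAt_id t).ofReal_comp
    have h2 := ((h1.mul_const Complex.I).cexp).const_mul b
    simpa using h2
  have hec : Continuous fun p : ℝ × ℝ => Complex.exp (p.2 * Complex.I) :=
    Complex.continuous_exp.comp ((Complex.continuous_ofReal.comp continuous_snd).mul
      continuous_const)
  have habs : ∀ t : ℝ, ‖Complex.exp (t * Complex.I)‖ = 1 := fun t =>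
    Complex.norm_exp_ofReal_mul_I t
  have hper' : ∀ b : ℂ, b * Complex.exp ((2*π : ℝ) * Complex.I) = b * Complex.exp ((0:ℝ) * Complex.I) := by
    intro b
    congr 1
    rw [show ((2*π : ℝ) : ℂ) * Complex.I = 2 * (π:ℝ) * Complex.I by push_cast; ring,
      Complex.exp_two_pi_mul_I]
    simp
  have hfd : Continuous (fderiv ℝ h) := hh.continuous_fderiv (by simp)
  have hdiff : Differentiable ℝ h := hh.differentiable (by simp)
  -- Family 1 : contraction of the boundary circle
  set b : ℝ → ℂ := fun s => ((φ s * r : ℝ) : ℂ) with hb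
  have hbc : Continuous b := Complex.continuous_ofReal.comp (hφc.mul continuous_const)
  set Γ₁ : ℝ → ℝ → ℂ := fun s t => h (b s * Complex.exp (t * Complex.I)) with hΓ₁
  set Δ₁ : ℝ → ℝ → ℂ := fun s t =>
    fderiv ℝ h (b s * Complex.exp (t * Complex.I))
      (b s * (Complex.exp (t * Complex.I) * Complex.I)) with hΔ₁
  have hmem : ∀ (s t : ℝ), ‖b s * Complex.exp (t * Complex.I)‖ ≤ r := by
    intro s t
    rw [norm_mul, habs, mul_one, Complex.norm_real,
      Real.norm_eq_abs, abs_of_nonneg (mul_nonneg (hφ01 s).1 hr.le)]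
    nlinarith [(hφ01 s).1, (hφ01 s).2]
  have hC1 : Continuous fun p : ℝ × ℝ => b p.1 * Complex.exp (p.2 * Complex.I) :=
    (hbc.comp continuous_fst).mul hec
  have hΓ₁c : Continuous fun p : ℝ × ℝ => Γ₁ p.1 p.2 := hh.continuous.comp hC1
  have hΔ₁c : Continuous fun p : ℝ × ℝ => Δ₁ p.1 p.2 :=
    (hfd.comp hC1).clm_apply ((hbc.comp continuous_fst).mul (hec.mul continuous_const))
  have hd₁ : ∀ s t, HasDerivAt (fun t => Γ₁ s t) (Δ₁ s t) t := fun s t =>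
    (hdiff _).hasFDerivAt.comp_hasDerivAt t (hexp (b s) t)
  have hnz₁ : ∀ s t, Γ₁ s t ≠ 0 := fun s t => hnz _ (hmem s t)
  have hIm1 := family_eq Γ₁ Δ₁ hΓ₁c hΔ₁c hd₁ hnz₁ (fun s => by
    simp only [hΓ₁]; rw [hper' (b s)])
  have hW10 : (∫ t in (0:ℝ)..(2*π), Δ₁ 0 t / Γ₁ 0 t) = 0 := by
    have hz : ∀ t : ℝ, Δ₁ 0 t / Γ₁ 0 t = 0 := by
      intro t
      have : b 0 = 0 := by simp [hb, hφ0]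
      simp [hΔ₁, this]
    simp only [hz, intervalIntegral.integral_zero]
  -- Family 2 : homotopy from the boundary loop to t ↦ I r e^{it}
  set w : ℝ → ℂ := fun t => h ((r:ℂ) * Complex.exp (t * Complex.I)) with hw
  set v : ℝ → ℂ := fun t => Complex.I * ((r:ℂ) * Complex.exp (t * Complex.I)) with hv
  have hrmem : ∀ (t : ℝ), ‖(r:ℂ) * Complex.exp (t * Complex.I)‖ = r := by
    intro t
    rw [norm_mul, habs, mul_one, Complex.norm_real,
      Real.norm_eq_abs, abs_of_nonneg hr.le]
  have hP : ∀ t : ℝ, 0 < ((starRingEnd ℂ) (w t) * v t).re := fun t => hbd _ (hrmem t)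
  set Γ₂ : ℝ → ℝ → ℂ := fun u t => (1 - (φ u : ℂ)) * w t + (φ u : ℂ) * v t with hΓ₂
  set Δ₂ : ℝ → ℝ → ℂ := fun u t =>
    (1 - (φ u : ℂ)) * (fderiv ℝ h ((r:ℂ) * Complex.exp (t * Complex.I))
        ((r:ℂ) * (Complex.exp (t * Complex.I) * Complex.I)))
      + (φ u : ℂ) * (Complex.I * ((r:ℂ) * (Complex.exp (t * Complex.I) * Complex.I))) with hΔ₂
  have hvsq : ∀ (t : ℝ), (starRingEnd ℂ) (v t) * v t = ((r^2 : ℝ) : ℂ) := by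
    intro t
    rw [mul_comm, Complex.mul_conj]
    norm_cast
    rw [← Complex.sq_norm]
    rw [show ‖v t‖ = r from ?_]
    · rw [hv]
      simp only [norm_mul, Complex.norm_I, one_mul]
      rw [habs t, mul_one, Complex.norm_real, Real.norm_eq_abs, abs_of_nonneg hr.le]
  -- positivity / nonvanishing of Γ₂
  have hpos₂ : ∀ (u t : ℝ), 0 < ((starRingEnd ℂ) (Γ₂ u t) * v t).re := by
    intro u t
    have expand : (starRingEnd ℂ) (Γ₂ u t) * v t
        = ((1 - φ u : ℝ) : ℂ) * ((starRingEnd ℂ) (w t) * v t) + ((φ u : ℝ) : ℂ) * ((r^2:ℝ):ℂ) := by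
      rw [hΓ₂]
      simp only [map_add, map_mul, map_sub, map_one, Complex.conj_ofReal]
      rw [← hvsq t]
      push_cast
      ring
    rw [expand]
    rw [Complex.add_re, Complex.re_ofReal_mul, ← Complex.ofReal_mul, Complex.ofReal_re]
    have ha0 := (hφ01 u).1
    have ha1 := (hφ01 u).2
    have hP' := hP t
    have hr2 : (0:ℝ) < r^2 := by positivity
    rcases le_total (((starRingEnd ℂ) (w t) * v t).re) (r^2) with hle | hle
    · nlinarith [mul_nonneg ha0 (sub_nonneg.2 hle)]
    · nlinarith [mul_nonneg (sub_nonneg.2 ha1) (sub_nonneg.2 hle)]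
  have hnz₂ : ∀ (u t : ℝ), Γ₂ u t ≠ 0 := by
    intro u t h0
    have := hpos₂ u t
    rw [h0] at this
    simp at this
  -- derivatives and continuity for family 2
  have hd₂ : ∀ (u t : ℝ), HasDerivAt (fun t => Γ₂ u t) (Δ₂ u t) t := by
    intro u t
    have h1 : HasDerivAt (fun t : ℝ => w t)
        (fderiv ℝ h ((r:ℂ) * Complex.exp (t * Complex.I))
          ((r:ℂ) * (Complex.exp (t * Complex.I) * Complex.I))) t :=
      (hdiff _).hasFDerivAt.comp_hasDerivAt t (hexp (r:ℂ) t)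
    have h2 : HasDerivAt (fun t : ℝ => v t)
        (Complex.I * ((r:ℂ) * (Complex.exp (t * Complex.I) * Complex.I))) t :=
      (hexp (r:ℂ) t).const_mul Complex.I
    exact (h1.const_mul _).add (h2.const_mul _)
  have hvC : Continuous fun p : ℝ × ℝ => v p.2 :=
    continuous_const.mul (continuous_const.mul hec)
  have hwd : Continuous fun p : ℝ × ℝ =>
      fderiv ℝ h ((r:ℂ) * Complex.exp (p.2 * Complex.I))
        ((r:ℂ) * (Complex.exp (p.2 * Complex.I) * Complex.I)) :=
    (hfd.comp (continuous_const.mul hec)).clm_apply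
      (continuous_const.mul (hec.mul continuous_const))
  have hφC : Continuous fun p : ℝ × ℝ => ((φ p.1 : ℝ) : ℂ) :=
    Complex.continuous_ofReal.comp (hφc.comp continuous_fst)
  have hΓ₂c : Continuous fun p : ℝ × ℝ => Γ₂ p.1 p.2 :=
    ((continuous_const.sub hφC).mul (hh.continuous.comp (continuous_const.mul hec))).add
      (hφC.mul hvC)
  have hΔ₂c : Continuous fun p : ℝ × ℝ => Δ₂ p.1 p.2 :=
    ((continuous_const.sub hφC).mul hwd).add
      (hφC.mul (continuous_const.mul (continuous_const.mul (hec.mul continuous_const))))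
  have hIm2 := family_eq Γ₂ Δ₂ hΓ₂c hΔ₂c hd₂ hnz₂ (fun u => by
    simp only [hΓ₂, hw, hv]
    rw [hper' (r:ℂ)])
  -- W₂ 0 = W₁ 1
  have heq01 : ∀ t : ℝ, Δ₂ 0 t / Γ₂ 0 t = Δ₁ 1 t / Γ₁ 1 t := by
    intro t
    have hb1 : b 1 = (r:ℂ) := by rw [hb]; simp [hφ1]
    simp only [hΔ₂, hΓ₂, hΔ₁, hΓ₁, hφ0, hb1, hw]
    push_cast
    ring_nf
  -- W₂ 1 computation
  have hW21 : (∫ t in (0:ℝ)..(2*π), Δ₂ 1 t / Γ₂ 1 t) = ((2*π : ℝ)) • Complex.I := by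
    have hint : ∀ t : ℝ, Δ₂ 1 t / Γ₂ 1 t = Complex.I := by
      intro t
      have hΓval : Γ₂ 1 t = v t := by
        simp only [hΓ₂, hφ1]
        push_cast
        ring
      have hΔval : Δ₂ 1 t = Complex.I * v t := by
        simp only [hΔ₂, hφ1, hv]
        push_cast
        ring
      have hvne : v t ≠ 0 := fun h0 => hnz₂ 1 t (hΓval.trans h0)
      rw [hΔval, hΓval]
      field_simp
    simp only [hint]
    rw [intervalIntegral.integral_const]
    norm_num
  -- final contradiction
  rw [hW10] at hIm1
  rw [show (∫ t in (0:ℝ)..(2*π), Δ₂ 0 t / Γ₂ 0 t) = ∫ t in (0:ℝ)..(2*π), Δ₁ 1 t / Γ₁ 1 t by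
    exact intervalIntegral.integral_congr (fun t _ => heq01 t), ← hIm1, hW21] at hIm2
  simp only [Complex.zero_im, Complex.smul_im, Complex.I_im, smul_eq_mul, mul_one] at hIm2
  have := pi_pos
  linarith

/-- a continuous planar vector field on a closed disk that points
counterclockwise along the boundary circle has a zero in the open disk. -/
theorem zero_of_counterclockwise_boundary (r : ℝ) (hr : 0 < r)
    (X : EuclideanSpace ℝ (Fin 2) → EuclideanSpace ℝ (Fin 2))
    (hX : ContinuousOn X {p : EuclideanSpace ℝ (Fin 2) | ‖p‖ ≤ r})
    (hccw : ∀ p : EuclideanSpace ℝ (Fin 2), ‖p‖ = r →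
      0 < ⟪X p, (WithLp.equiv 2 (Fin 2 → ℝ)).symm ![-(p 1), p 0]⟫) :
    ∃ x : EuclideanSpace ℝ (Fin 2), ‖x‖ < r ∧ X x = 0 := by
  by_contra hcon
  push_neg at hcon
  set φ : ℂ → EuclideanSpace ℝ (Fin 2) := fun z => (WithLp.equiv 2 (Fin 2 → ℝ)).symm ![z.re, z.im] with hφdef
  set ψ : EuclideanSpace ℝ (Fin 2) → ℂ := fun p => (p 0 : ℂ) + (p 1 : ℂ) * Complex.I with hψdef
  have hφ0 : ∀ z : ℂ, φ z 0 = z.re := fun z => rfl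
  have hφ1 : ∀ z : ℂ, φ z 1 = z.im := fun z => rfl
  have hψφ : ∀ z : ℂ, ψ (φ z) = z := by
    intro z
    simp only [hψdef, hφ0, hφ1]
    exact (Complex.re_add_im z)
  have hφψ : ∀ p : EuclideanSpace ℝ (Fin 2), φ (ψ p) = p := by
    intro p
    ext i
    fin_cases i
    · show (ψ p).re = p 0
      simp [hψdef]
    · show (ψ p).im = p 1
      simp [hψdef]
  have hnorm : ∀ z : ℂ, ‖φ z‖ = ‖z‖ := by
    intro z
    rw [EuclideanSpace.norm_eq, Complex.norm_def, Complex.normSq_apply]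
    congr 1
    rw [Fin.sum_univ_two, hφ0, hφ1]
    simp [Real.norm_eq_abs, sq_abs]
    ring
  have hnormψ : ∀ p : EuclideanSpace ℝ (Fin 2), ‖ψ p‖ = ‖p‖ := by
    intro p
    conv_rhs => rw [← hφψ p]
    rw [hnorm]
  have hψ0 : ∀ p : EuclideanSpace ℝ (Fin 2), ψ p = 0 → p = 0 := by
    intro p hp
    have := hnormψ p
    rw [hp, norm_zero] at this
    exact norm_eq_zero.mp this.symm
  have hφc : Continuous φ := by
    apply Continuous.comp
    · exact (PiLp.continuous_toLp 2 (fun _ : Fin 2 => ℝ))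
    · apply continuous_pi
      intro i
      fin_cases i
      · exact Complex.continuous_re
      · exact Complex.continuous_im
  have hψc : Continuous ψ := by
    have h0 : Continuous fun p : EuclideanSpace ℝ (Fin 2) => p 0 := (EuclideanSpace.proj (0 : Fin 2)).continuous
    have h1 : Continuous fun p : EuclideanSpace ℝ (Fin 2) => p 1 := (EuclideanSpace.proj (1 : Fin 2)).continuous
    exact (Complex.continuous_ofReal.comp h0).add
      ((Complex.continuous_ofReal.comp h1).mul continuous_const)
  have hinner : ∀ a p : EuclideanSpace ℝ (Fin 2),
      ⟪a, (WithLp.equiv 2 (Fin 2 → ℝ)).symm ![-(p 1), p 0]⟫ =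
        ((starRingEnd ℂ) (ψ a) * (Complex.I * ψ p)).re := by
    intro a p
    rw [PiLp.inner_apply, Fin.sum_univ_two]
    simp only [hψdef, RCLike.inner_apply, starRingEnd_apply, star_trivial]
    have e0 : ((WithLp.equiv 2 (Fin 2 → ℝ)).symm ![-(p 1), p 0]) 0 = -(p 1) := rfl
    have e1 : ((WithLp.equiv 2 (Fin 2 → ℝ)).symm ![-(p 1), p 0]) 1 = p 0 := rfl
    rw [e0, e1]
    simp [Complex.mul_re, Complex.mul_im]
    ring
  -- the transported field
  set g : ℂ → ℂ := fun z => ψ (X (φ z)) with hg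
  have hXnz : ∀ p : EuclideanSpace ℝ (Fin 2), ‖p‖ ≤ r → X p ≠ 0 := by
    intro p hp hzero
    rcases lt_or_eq_of_le hp with h | h
    · exact hcon p h hzero
    · have := hccw p h
      rw [hzero] at this
      simp at this
  have hgc : ContinuousOn g (Metric.closedBall 0 r) := by
    apply hψc.comp_continuousOn
    apply hX.comp hφc.continuousOn
    intro z hz
    simp only [Set.mem_setOf_eq, hnorm]
    rwa [Metric.mem_closedBall, dist_zero_right] at hz
  have hgnz : ∀ z ∈ Metric.closedBall (0:ℂ) r, g z ≠ 0 := by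
    intro z hz h0
    rw [Metric.mem_closedBall, dist_zero_right] at hz
    exact hXnz (φ z) (by rwa [hnorm]) (hψ0 _ h0)
  -- minimum of ‖g‖ on the closed ball
  obtain ⟨z₀, hz₀, hmin⟩ := (isCompact_closedBall (0:ℂ) r).exists_isMinOn
    ⟨0, by simp [hr.le]⟩ (continuous_norm.comp_continuousOn hgc)
  set m := ‖g z₀‖ with hm
  have hmpos : 0 < m := norm_pos_iff.mpr (hgnz z₀ hz₀)
  -- minimum of the boundary pairing on the sphere
  have hsphsub : Metric.sphere (0:ℂ) r ⊆ Metric.closedBall 0 r := Metric.sphere_subset_closedBall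
  have hbcont : ContinuousOn (fun z : ℂ => ((starRingEnd ℂ) (g z) * (Complex.I * z)).re)
      (Metric.sphere (0:ℂ) r) :=
    Complex.continuous_re.comp_continuousOn
      (((Complex.continuous_conj.comp_continuousOn (hgc.mono hsphsub))).mul
        ((continuous_const.mul continuous_id).continuousOn))
  obtain ⟨z₁, hz₁, hmin'⟩ := (isCompact_sphere (0:ℂ) r).exists_isMinOn
    ⟨(r:ℂ), by simp [abs_of_pos hr]⟩ hbcont
  set m' := ((starRingEnd ℂ) (g z₁) * (Complex.I * z₁)).re with hm'
  have hsph : ∀ z ∈ Metric.sphere (0:ℂ) r, ‖z‖ = r := by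
    intro z hz
    rwa [mem_sphere_iff_norm, sub_zero] at hz
  have hpair : ∀ z : ℂ, ‖z‖ = r →
      ((starRingEnd ℂ) (g z) * (Complex.I * z)).re =
        ⟪X (φ z), (WithLp.equiv 2 (Fin 2 → ℝ)).symm ![-((φ z) 1), (φ z) 0]⟫ := by
    intro z hz
    rw [hinner (X (φ z)) (φ z), hψφ]
  have hm'pos : 0 < m' := by
    rw [hm', hpair z₁ (hsph z₁ hz₁)]
    exact hccw (φ z₁) (by rw [hnorm]; exact hsph z₁ hz₁)
  -- approximation
  set ε := min m (m' / r) with hε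
  have hεpos : 0 < ε := lt_min hmpos (div_pos hm'pos hr)
  obtain ⟨h, hhsm, hhapprox⟩ := smooth_approxC r g hgc hεpos
  apply no_smooth_ccw_field r hr h hhsm
  · -- nonvanishing
    intro z hz
    have hzball : z ∈ Metric.closedBall (0:ℂ) r := by
      rwa [Metric.mem_closedBall, dist_zero_right]
    have h1 := hhapprox z hzball
    have h2 : m ≤ ‖g z‖ := hmin hzball
    have h3 : ε ≤ m := min_le_left _ _
    intro h0
    rw [h0, zero_sub, norm_neg] at h1
    linarith
  · -- boundary positivity
    intro z hz
    have hzball : z ∈ Metric.closedBall (0:ℂ) r :=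
      hsphsub (by rwa [mem_sphere_iff_norm, sub_zero])
    have hzsph : z ∈ Metric.sphere (0:ℂ) r := by rwa [mem_sphere_iff_norm, sub_zero]
    have h1 := hhapprox z hzball
    have h2 : m' ≤ ((starRingEnd ℂ) (g z) * (Complex.I * z)).re := hmin' hzsph
    have hkey : ((starRingEnd ℂ) (h z) * (Complex.I * z)).re =
        ((starRingEnd ℂ) (g z) * (Complex.I * z)).re +
        ((starRingEnd ℂ) (h z - g z) * (Complex.I * z)).re := by
      rw [← Complex.add_re, ← add_mul, ← map_add]
      ring_nf
    have hb : |((starRingEnd ℂ) (h z - g z) * (Complex.I * z)).re| ≤ ‖h z - g z‖ * r := by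
      calc |((starRingEnd ℂ) (h z - g z) * (Complex.I * z)).re|
          ≤ ‖(starRingEnd ℂ) (h z - g z) * (Complex.I * z)‖ :=
            Complex.abs_re_le_norm _
        _ = ‖h z - g z‖ * r := by
            rw [norm_mul, norm_mul, Complex.norm_conj, Complex.norm_I, one_mul]
            rw [hz]
    have h4 : ε ≤ m' / r := min_le_right _ _
    have h5 : ‖h z - g z‖ * r < m' := by
      calc ‖h z - g z‖ * r < ε * r := by
            apply mul_lt_mul_of_pos_right h1 hr
        _ ≤ (m' / r) * r := mul_le_mul_of_nonneg_right h4 hr.le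
        _ = m' := by field_simp
    rw [hkey]
    have := abs_le.mp hb
    linarith
end
end
end

section
/- An orbit of a flow through an interior periodic point whose period map does not fix the frontier stays in the interior: let χ be a continuous flow on a topological space X, let S ⊆ X, and let p be a point in the interior of S with χ(2, p) = p. If χ(2, q) ≠ q for every q in the frontier (topological boundary) of S, then χ(t, p) lies in the interior of S for every t ∈ ℝ. In particular χ(1, p) ∈ S, so the time-1 map of χ does not displace S off itself. -/
/-!
The time-2 map fixes `p`, hence, since it commutes with the flow, every point of the orbit of `p`.
So the orbit, a connected set through the interior point `p`, never meets the frontier of `S`,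
and therefore cannot leave the interior of `S`.
-/

open Set Function

theorem IsPreconnected.subset_interior_of_disjoint_frontier {X : Type*} [TopologicalSpace X]
    {s t : Set X} (hs : IsPreconnected s) (hst : (s ∩ interior t).Nonempty)
    (hfr : Disjoint s (frontier t)) : s ⊆ interior t := by
  refine hs.subset_of_closure_inter_subset isOpen_interior hst ?_
  rintro x ⟨hx_cl, hx_s⟩
  have hx : x ∈ interior t ∪ frontier t :=
    closure_eq_interior_union_frontier t ▸ closure_mono interior_subset hx_cl
  exact hx.resolve_right (hfr.notMem_of_mem_left hx_s)

namespace Flow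

variable {τ : Type*} [AddCommMonoid τ] [TopologicalSpace τ]
  {α : Type*} [TopologicalSpace α] (ϕ : Flow τ α)

theorem orbit_subset_fixedPoints {T : τ} {x : α} (hx : IsFixedPt (ϕ T) x) :
    orbit ϕ x ⊆ fixedPoints (ϕ T) := by
  rintro _ ⟨t, rfl⟩
  change ϕ T (ϕ t x) = ϕ t x
  rw [← map_add, add_comm, map_add, hx.eq]

theorem isPreconnected_orbit [PreconnectedSpace τ] (x : α) : IsPreconnected (orbit ϕ x) :=
  isPreconnected_range (ϕ.continuous continuous_id continuous_const)

end Flow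

/-- if `p` is an interior point of `S` with `χ (2, p) = p` and the time-2 map of
the flow `χ` fixes no point of the frontier of `S`, then the whole orbit of `p` stays in the
interior of `S`; in particular `χ (1, p) ∈ S`. -/
theorem orbit_stays_in_interior {X : Type*} [TopologicalSpace X] (χ : Flow ℝ X) (S : Set X)
    (p : X) (hp : p ∈ interior S) (hper : χ.toFun 2 p = p)
    (hfr : ∀ q ∈ frontier S, χ.toFun 2 q ≠ q) :
    (∀ t : ℝ, χ.toFun t p ∈ interior S) ∧ χ.toFun 1 p ∈ S := by
  have horbit_disjoint : Disjoint (χ.orbit p) (frontier S) :=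
    Set.disjoint_right.mpr fun q hq hq_orbit => hfr q hq (χ.orbit_subset_fixedPoints hper hq_orbit)
  have horbit : χ.orbit p ⊆ interior S :=
    (χ.isPreconnected_orbit p).subset_interior_of_disjoint_frontier
      ⟨p, χ.mem_orbit_self p, hp⟩ horbit_disjoint
  have hall (t : ℝ) : χ.toFun t p ∈ interior S := horbit (χ.mem_orbit p t)
  exact ⟨hall, interior_subset (hall 1)⟩
end
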